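/- For i = 1, 2, let X_i be a nondegenerate conic in P³(ℂ), i.e., a set of the form {[g_i v] ∈ P³(ℂ) : v ∈ ℂ⁴∖{0}, v₀ = 0, v₁² + v₂² + v₃² = 0} for some g_i ∈ GL₄(ℂ), and let L_i be a line (a 2-dimensional subspace of ℂ⁴) whose projectivization is disjoint from X_i (no nonzero vector of L_i maps to a point of X_i). Then there exists h ∈ GL₄(ℂ) such that the induced projective transformation maps X₁ onto X₂ and L₁ onto L₂ (i.e., h·X₁ = X₂ as subsets of P³(ℂ) and h(L₁) = L₂ as subspaces of ℂ⁴). -/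
import Mathlib

open Matrix
open scoped LinearAlgebra.Projectivization

/-- The nondegenerate conic in `P³(ℂ)` obtained as the image under `g ∈ GL₄(ℂ)` of the
standard conic `{v₀ = 0, v₁² + v₂² + v₃² = 0}`.  Since `g` is invertible, `g *ᵥ v ≠ 0`
for every nonzero `v`, so this is exactly the set `{[g v] : v ≠ 0, v₀ = 0, Σᵢ vᵢ² = 0}`. -/
noncomputable def conic (g : GL (Fin 4) ℂ) : Set (ℙ ℂ (Fin 4 → ℂ)) :=
  {p | ∃ (v : Fin 4 → ℂ) (hv : (g : Matrix (Fin 4) (Fin 4) ℂ) *ᵥ v ≠ 0),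
    v ≠ 0 ∧ v 0 = 0 ∧ v 1 ^ 2 + v 2 ^ 2 + v 3 ^ 2 = 0 ∧
    p = Projectivization.mk ℂ ((g : Matrix (Fin 4) (Fin 4) ℂ) *ᵥ v) hv}

namespace ConicAux

noncomputable section

abbrev E := Fin 4 → ℂ

def Bf (x y : E) : ℂ := x 1 * y 1 + x 2 * y 2 + x 3 * y 3

def d0 : E := ![1,0,0,0]
def d1 : E := ![0,1,0,0]

@[simp] lemma d0_0 : d0 0 = 1 := rfl
@[simp] lemma d0_1 : d0 1 = 0 := rfl
@[simp] lemma d0_2 : d0 2 = 0 := rfl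
@[simp] lemma d0_3 : d0 3 = 0 := rfl
@[simp] lemma d1_0 : d1 0 = 0 := rfl
@[simp] lemma d1_1 : d1 1 = 1 := rfl
@[simp] lemma d1_2 : d1 2 = 0 := rfl
@[simp] lemma d1_3 : d1 3 = 0 := rfl

lemma Bf_self (v : E) : Bf v v = v 1 ^ 2 + v 2 ^ 2 + v 3 ^ 2 := by simp [Bf]; ring

/-- quadratic-preserving property of a linear endomorphism -/
def good (f : E →ₗ[ℂ] E) : Prop :=
  (∀ v : E, f v 0 = v 0) ∧
    ∀ v : E, v 0 = 0 →
      f v 1 ^ 2 + f v 2 ^ 2 + f v 3 ^ 2 = v 1 ^ 2 + v 2 ^ 2 + v 3 ^ 2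

lemma good_comp {f g : E →ₗ[ℂ] E} (hf : good f) (hg : good g) : good (f.comp g) := by
  refine ⟨fun v => ?_, fun v hv => ?_⟩
  · simp only [LinearMap.comp_apply, hf.1, hg.1]
  · have h0 : g v 0 = 0 := by rw [hg.1]; exact hv
    simp only [LinearMap.comp_apply]
    rw [hf.2 _ h0, hg.2 _ hv]

lemma good_of_inv {f g : E →ₗ[ℂ] E} (hf : good f) (hfg : f.comp g = LinearMap.id) :
    good g := by
  have h := fun v : E => congrArg (fun m : E →ₗ[ℂ] E => m v) hfg
  simp only [LinearMap.comp_apply, LinearMap.id_apply] at h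
  refine ⟨fun v => ?_, fun v hv => ?_⟩
  · conv_rhs => rw [← h v]
    rw [hf.1]
  · have h0 : g v 0 = 0 := by rw [← hf.1 (g v), h v]; exact hv
    have := hf.2 (g v) h0
    rw [h v] at this
    rw [← this]

variable (c : E) (ε : ℂ)

/-- scaled reflection -/
def S : E →ₗ[ℂ] E where
  toFun x := ε • x - (ε * (2 * Bf x c / Bf c c)) • c
  map_add' x y := by
    funext i
    simp only [Bf, Pi.add_apply, Pi.sub_apply, Pi.smul_apply, smul_eq_mul]
    ring
  map_smul' a x := by
    funext i
    simp only [Bf, Pi.add_apply, Pi.sub_apply, Pi.smul_apply, smul_eq_mul, RingHom.id_apply]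
    ring

lemma S_apply (x : E) : S c ε x = ε • x - (ε * (2 * Bf x c / Bf c c)) • c := rfl

lemma S_zero_coord (hc0 : c 0 = 0) (x : E) : S c ε x 0 = ε * x 0 := by
  simp [S_apply, hc0]

lemma Bf_symm (a b : E) : Bf a b = Bf b a := by simp [Bf]; ring

lemma Bf_S_left (x y : E) :
    Bf (S c ε x) y = ε * Bf x y - ε * (2 * Bf x c / Bf c c) * Bf c y := by
  simp only [S_apply, Bf, Pi.sub_apply, Pi.smul_apply, smul_eq_mul]
  ring

lemma Bf_S_c (hcc : Bf c c ≠ 0) (x : E) : Bf (S c ε x) c = -(ε * Bf x c) := by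
  rw [Bf_S_left]; field_simp; ring

lemma S_S (hcc : Bf c c ≠ 0) (hε : ε = 1 ∨ ε = -1) (x : E) : S c ε (S c ε x) = x := by
  rw [S_apply c ε (S c ε x), Bf_S_c c ε hcc, S_apply]
  rcases hε with rfl | rfl <;> match_scalars <;> field_simp <;> ring

lemma Bf_S_S (hcc : Bf c c ≠ 0) (hε : ε = 1 ∨ ε = -1) (x : E) :
    Bf (S c ε x) (S c ε x) = Bf x x := by
  rw [Bf_S_left c ε x (S c ε x), Bf_symm x (S c ε x), Bf_symm c (S c ε x),
    Bf_S_left c ε x x, Bf_S_c c ε hcc, Bf_symm c x]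
  rcases hε with rfl | rfl <;> field_simp <;> ring

/-- `v ↦ v 0 • u` as a linear map -/
def cmul (u : E) : E →ₗ[ℂ] E :=
  (LinearMap.toSpanSingleton ℂ E u).comp (LinearMap.proj 0)

lemma cmul_apply (u : E) (v : E) : cmul u v = v 0 • u := rfl

def phi (u : E) : E →ₗ[ℂ] E := cmul u + (S c ε).comp (LinearMap.id - cmul d0)

def psi (u : E) : E →ₗ[ℂ] E := cmul d0 + (S c ε).comp (LinearMap.id - cmul u)

lemma phi_apply (u v : E) : phi c ε u v = v 0 • u + S c ε (v - v 0 • d0) := rfl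

lemma psi_apply (u v : E) : psi c ε u v = v 0 • d0 + S c ε (v - v 0 • u) := rfl

lemma phi_zero_coord (u : E) (hu : u 0 = 1) (hc0 : c 0 = 0) (v : E) :
    phi c ε u v 0 = v 0 := by
  rw [phi_apply]
  simp [S_zero_coord c ε hc0, hu]
  ring

lemma psi_zero_coord (u : E) (hu : u 0 = 1) (hc0 : c 0 = 0) (v : E) :
    psi c ε u v 0 = v 0 := by
  rw [psi_apply]
  simp [S_zero_coord c ε hc0, hu]
  ring

lemma psi_phi (u : E) (hu : u 0 = 1) (hc0 : c 0 = 0) (hcc : Bf c c ≠ 0)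
    (hε : ε = 1 ∨ ε = -1) : (psi c ε u).comp (phi c ε u) = LinearMap.id := by
  apply LinearMap.ext
  intro v
  have h0 : phi c ε u v 0 = v 0 := phi_zero_coord c ε u hu hc0 v
  rw [LinearMap.comp_apply, LinearMap.id_apply, psi_apply, h0]
  have h1 : phi c ε u v - v 0 • u = S c ε (v - v 0 • d0) := by
    rw [phi_apply]; abel
  rw [h1, S_S c ε hcc hε]
  abel

lemma phi_psi (u : E) (hu : u 0 = 1) (hc0 : c 0 = 0) (hcc : Bf c c ≠ 0)
    (hε : ε = 1 ∨ ε = -1) : (phi c ε u).comp (psi c ε u) = LinearMap.id := by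
  apply LinearMap.ext
  intro v
  have h0 : psi c ε u v 0 = v 0 := psi_zero_coord c ε u hu hc0 v
  rw [LinearMap.comp_apply, LinearMap.id_apply, phi_apply, h0]
  have h1 : psi c ε u v - v 0 • d0 = S c ε (v - v 0 • u) := by
    rw [psi_apply]; abel
  rw [h1, S_S c ε hcc hε]
  abel

lemma good_phi (u : E) (hu : u 0 = 1) (hc0 : c 0 = 0) (hcc : Bf c c ≠ 0)
    (hε : ε = 1 ∨ ε = -1) : good (phi c ε u) := by
  refine ⟨phi_zero_coord c ε u hu hc0, fun v hv => ?_⟩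
  have h1 : phi c ε u v = S c ε v := by
    rw [phi_apply, hv]; simp
  rw [h1, ← Bf_self, ← Bf_self, Bf_S_S c ε hcc hε]

lemma phi_d0 (u : E) : phi c ε u d0 = u := by
  rw [phi_apply]
  simp

lemma phi_d1 (u w : E) (hkey : 2 * Bf d1 c / Bf c c = 1) (hdw : ε • (d1 - c) = w) :
    phi c ε u d1 = w := by
  rw [phi_apply]
  simp only [d1_0, zero_smul, sub_zero, add_zero, zero_add, S_apply, hkey, mul_one]
  rw [← hdw]
  module

lemma exists_good (u w : E) (hu : u 0 = 1) (hw0 : w 0 = 0) (hww : Bf w w = 1) :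
    ∃ φ ψ : E →ₗ[ℂ] E, ψ.comp φ = LinearMap.id ∧ φ.comp ψ = LinearMap.id ∧
      φ d0 = u ∧ φ d1 = w ∧ good φ := by
  have hww' : w 1 * w 1 + w 2 * w 2 + w 3 * w 3 = 1 := hww
  by_cases hc : Bf (d1 - w) (d1 - w) = 0
  · -- use c = d1 + w, ε = -1
    have hc' : (1 - w 1) * (1 - w 1) + w 2 * w 2 + w 3 * w 3 = 0 := by
      have := hc
      simp only [Bf, Pi.sub_apply, d1_1, d1_2, d1_3] at this
      linear_combination this
    have hcc : Bf (d1 + w) (d1 + w) ≠ 0 := by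
      have h4 : Bf (d1 + w) (d1 + w) = 4 := by
        simp only [Bf, Pi.add_apply, d1_1, d1_2, d1_3]
        linear_combination 2 * hww' - hc'
      rw [h4]; norm_num
    have hc0 : (d1 + w) 0 = 0 := by simp [hw0]
    have hkey : 2 * Bf d1 (d1 + w) / Bf (d1 + w) (d1 + w) = 1 := by
      rw [div_eq_one_iff_eq hcc]
      simp only [Bf, Pi.add_apply, d1_1, d1_2, d1_3]
      linear_combination -hww'
    have hdw : (-1 : ℂ) • (d1 - (d1 + w)) = w := by module
    exact ⟨phi (d1 + w) (-1) u, psi (d1 + w) (-1) u,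
      psi_phi _ _ u hu hc0 hcc (Or.inr rfl),
      phi_psi _ _ u hu hc0 hcc (Or.inr rfl),
      phi_d0 _ _ u, phi_d1 _ _ u w hkey hdw,
      good_phi _ _ u hu hc0 hcc (Or.inr rfl)⟩
  · -- use c = d1 - w, ε = 1
    have hcc : Bf (d1 - w) (d1 - w) ≠ 0 := hc
    have hc0 : (d1 - w) 0 = 0 := by simp [hw0]
    have hkey : 2 * Bf d1 (d1 - w) / Bf (d1 - w) (d1 - w) = 1 := by
      rw [div_eq_one_iff_eq hcc]
      simp only [Bf, Pi.sub_apply, d1_1, d1_2, d1_3]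
      linear_combination -hww'
    have hdw : (1 : ℂ) • (d1 - (d1 - w)) = w := by module
    exact ⟨phi (d1 - w) 1 u, psi (d1 - w) 1 u,
      psi_phi _ _ u hu hc0 hcc (Or.inl rfl),
      phi_psi _ _ u hu hc0 hcc (Or.inl rfl),
      phi_d0 _ _ u, phi_d1 _ _ u w hkey hdw,
      good_phi _ _ u hu hc0 hcc (Or.inl rfl)⟩

end
end ConicAux

noncomputable section

open ConicAux

lemma extract (g : GL (Fin 4) ℂ) (L : Submodule ℂ (Fin 4 → ℂ))
    (hL : Module.finrank ℂ L = 2)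
    (hd : ∀ v ∈ L, ∀ hv : v ≠ 0, Projectivization.mk ℂ v hv ∉ conic g) :
    ∃ u w : E, u 0 = 1 ∧ w 0 = 0 ∧ Bf w w = 1 ∧
      Submodule.map
        (Matrix.mulVecLin ((g⁻¹ : GL (Fin 4) ℂ) : Matrix (Fin 4) (Fin 4) ℂ)) L
        = Submodule.span ℂ {u, w} := by
  have hBA : (g : Matrix (Fin 4) (Fin 4) ℂ) * ((g⁻¹ : GL (Fin 4) ℂ) : Matrix (Fin 4) (Fin 4) ℂ)
      = 1 := by rw [← Units.val_mul, mul_inv_cancel]; rfl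
  have hAB : ((g⁻¹ : GL (Fin 4) ℂ) : Matrix (Fin 4) (Fin 4) ℂ) * (g : Matrix (Fin 4) (Fin 4) ℂ)
      = 1 := by rw [← Units.val_mul, inv_mul_cancel]; rfl
  let e : E ≃ₗ[ℂ] E := LinearEquiv.ofLinear
    (Matrix.mulVecLin ((g⁻¹ : GL (Fin 4) ℂ) : Matrix (Fin 4) (Fin 4) ℂ))
    (Matrix.mulVecLin (g : Matrix (Fin 4) (Fin 4) ℂ))
    (by rw [← Matrix.mulVecLin_mul, hAB, Matrix.mulVecLin_one])
    (by rw [← Matrix.mulVecLin_mul, hBA, Matrix.mulVecLin_one])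
  set M := Submodule.map
    (Matrix.mulVecLin ((g⁻¹ : GL (Fin 4) ℂ) : Matrix (Fin 4) (Fin 4) ℂ)) L with hMdef
  have hM2 : Module.finrank ℂ M = 2 := by
    have h := LinearEquiv.finrank_map_eq e L
    exact h.trans hL
  have hQne : ∀ v ∈ M, v ≠ 0 → v 0 = 0 → v 1 ^ 2 + v 2 ^ 2 + v 3 ^ 2 ≠ 0 := by
    rintro v hv hvne hv0 hQ
    obtain ⟨x, hxL, rfl⟩ := hv
    have hx : x ≠ 0 := fun h => hvne (by rw [h, map_zero])
    have hgv : (g : Matrix (Fin 4) (Fin 4) ℂ) *ᵥ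
        (Matrix.mulVecLin ((g⁻¹ : GL (Fin 4) ℂ) : Matrix (Fin 4) (Fin 4) ℂ) x) = x := by
      rw [Matrix.mulVecLin_apply, Matrix.mulVec_mulVec, hBA, Matrix.one_mulVec]
    have hne : (g : Matrix (Fin 4) (Fin 4) ℂ) *ᵥ
        (Matrix.mulVecLin ((g⁻¹ : GL (Fin 4) ℂ) : Matrix (Fin 4) (Fin 4) ℂ) x) ≠ 0 := by
      rw [hgv]; exact hx
    refine hd _ (by rw [hgv]; exact hxL) hne ?_
    exact ⟨_, hne, hvne, hv0, hQ, rfl⟩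
  have hu : ∃ u ∈ M, u 0 ≠ 0 := by
    by_contra hcon
    push_neg at hcon
    have hMbot : M ≠ ⊥ := by
      intro h; rw [h, finrank_bot] at hM2; norm_num at hM2
    obtain ⟨a, haM, ha0⟩ := Submodule.exists_mem_ne_zero_of_ne_bot hMbot
    have hlt : (ℂ ∙ a) < M := by
      rcases lt_or_eq_of_le ((Submodule.span_singleton_le_iff_mem a M).2 haM) with h | h
      · exact h
      · exfalso; rw [← h, finrank_span_singleton ha0] at hM2; norm_num at hM2
    obtain ⟨b, hbM, hb⟩ := SetLike.exists_of_lt hlt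
    have hkey : ∃ v ∈ M, v ≠ 0 ∧ v 1 ^ 2 + v 2 ^ 2 + v 3 ^ 2 = 0 := by
      by_cases hQb : b 1 ^ 2 + b 2 ^ 2 + b 3 ^ 2 = 0
      · exact ⟨b, hbM, fun h => hb (h ▸ Submodule.zero_mem _), hQb⟩
      · obtain ⟨s, hs⟩ := IsAlgClosed.exists_pow_nat_eq
          ((Bf a b) ^ 2 - (a 1 ^ 2 + a 2 ^ 2 + a 3 ^ 2) * (b 1 ^ 2 + b 2 ^ 2 + b 3 ^ 2))
          (n := 2) two_pos
        set t : ℂ := (-(Bf a b) + s) / (b 1 ^ 2 + b 2 ^ 2 + b 3 ^ 2) with ht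
        refine ⟨a + t • b, Submodule.add_mem _ haM (Submodule.smul_mem _ _ hbM), ?_, ?_⟩
        · intro h
          have hta : t ≠ 0 := by
            intro h0; rw [h0, zero_smul, add_zero] at h; exact ha0 h
          apply hb
          rw [Submodule.mem_span_singleton]
          refine ⟨-t⁻¹, ?_⟩
          have ha' : a = -(t • b) := eq_neg_of_add_eq_zero_left h
          rw [ha', smul_neg, neg_smul, neg_neg, smul_smul, inv_mul_cancel₀ hta, one_smul]
        · simp only [Bf] at hs
          simp only [Pi.add_apply, Pi.smul_apply, smul_eq_mul, ht, Bf]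
          field_simp
          linear_combination (b 1 ^ 2 + b 2 ^ 2 + b 3 ^ 2) * hs
    obtain ⟨v, hvM, hvne, hvQ⟩ := hkey
    exact hQne v hvM hvne (hcon v hvM) hvQ
  obtain ⟨u₀, hu₀M, hu₀⟩ := hu
  set u : E := (u₀ 0)⁻¹ • u₀ with hudef
  have huM : u ∈ M := Submodule.smul_mem _ _ hu₀M
  have hu1 : u 0 = 1 := by rw [hudef]; simp [inv_mul_cancel₀ hu₀]
  have hune : u ≠ 0 := by intro h; rw [h] at hu1; simp at hu1
  have hlt : (ℂ ∙ u) < M := by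
    rcases lt_or_eq_of_le ((Submodule.span_singleton_le_iff_mem u M).2 huM) with h | h
    · exact h
    · exfalso; rw [← h, finrank_span_singleton hune] at hM2; norm_num at hM2
  obtain ⟨b, hbM, hb⟩ := SetLike.exists_of_lt hlt
  set w₀ : E := b - b 0 • u with hwdef
  have hw₀M : w₀ ∈ M := Submodule.sub_mem _ hbM (Submodule.smul_mem _ _ huM)
  have hw₀0 : w₀ 0 = 0 := by simp [hwdef, hu1]
  have hw₀ne : w₀ ≠ 0 := by
    intro h
    apply hb
    rw [Submodule.mem_span_singleton]
    refine ⟨b 0, ?_⟩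
    have := sub_eq_zero.mp h
    exact this.symm
  have hQw : w₀ 1 ^ 2 + w₀ 2 ^ 2 + w₀ 3 ^ 2 ≠ 0 := hQne w₀ hw₀M hw₀ne hw₀0
  have hBw : Bf w₀ w₀ ≠ 0 := by rw [Bf_self]; exact hQw
  obtain ⟨s, hs⟩ := IsAlgClosed.exists_pow_nat_eq ((Bf w₀ w₀)⁻¹) (n := 2) two_pos
  have hsne : s ≠ 0 := by
    intro h
    rw [h] at hs
    exact hBw (inv_eq_zero.mp (by rw [← hs]; ring))
  set w : E := s • w₀ with hwdef'
  have hwM : w ∈ M := Submodule.smul_mem _ _ hw₀M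
  have hw0 : w 0 = 0 := by rw [hwdef']; simp [hw₀0]
  have hwne : w ≠ 0 := smul_ne_zero hsne hw₀ne
  have hBww : Bf w w = 1 := by
    have h1 : Bf w w = s ^ 2 * Bf w₀ w₀ := by rw [hwdef']; simp [Bf]; ring
    rw [h1, hs, inv_mul_cancel₀ hBw]
  have hind : LinearIndependent ℂ ![u, w] := by
    rw [LinearIndependent.pair_iff]
    intro p q hpq
    have h0 := congrFun hpq 0
    simp only [Pi.add_apply, Pi.smul_apply, smul_eq_mul, hu1, hw0, mul_one, mul_zero,
      add_zero, Pi.zero_apply] at h0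
    subst h0
    rw [zero_smul, zero_add] at hpq
    exact ⟨rfl, (smul_eq_zero.mp hpq).resolve_right hwne⟩
  have hle : Submodule.span ℂ {u, w} ≤ M := by
    rw [Submodule.span_le, Set.insert_subset_iff, Set.singleton_subset_iff]
    exact ⟨huM, hwM⟩
  have hsp : Module.finrank ℂ (Submodule.span ℂ ({u, w} : Set E)) = 2 := by
    have hr : Set.range ![u, w] = {u, w} := by
      ext x; simp [Matrix.range_cons, Matrix.range_empty, or_comm]
    have h := finrank_span_eq_card hind
    rw [hr] at h
    rw [h]; simp
  have hfin : Submodule.span ℂ ({u, w} : Set E) = M :=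
    Submodule.eq_of_le_of_finrank_le hle (by rw [hM2, hsp])
  exact ⟨u, w, hu1, hw0, hBww, hfin.symm⟩

lemma conic_stab (g k : GL (Fin 4) ℂ)
    (h1 : good (Matrix.mulVecLin ((k : GL (Fin 4) ℂ) : Matrix (Fin 4) (Fin 4) ℂ)))
    (h2 : good (Matrix.mulVecLin ((k⁻¹ : GL (Fin 4) ℂ) : Matrix (Fin 4) (Fin 4) ℂ))) :
    conic (g * k) = conic g := by
  have mk_congr : ∀ (x y : E) (hx : x ≠ 0) (hy : y ≠ 0), x = y →
      Projectivization.mk ℂ x hx = Projectivization.mk ℂ y hy := by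
    rintro x y hx hy rfl; rfl
  ext p
  constructor
  · rintro ⟨v, hv, hvne, hv0, hQ, rfl⟩
    have hveq : ((g * k : GL (Fin 4) ℂ) : Matrix (Fin 4) (Fin 4) ℂ) *ᵥ v
        = (g : Matrix (Fin 4) (Fin 4) ℂ) *ᵥ ((k : Matrix (Fin 4) (Fin 4) ℂ) *ᵥ v) := by
      rw [Matrix.mulVec_mulVec, ← Units.val_mul]
    have hkv : (k : Matrix (Fin 4) (Fin 4) ℂ) *ᵥ v ≠ 0 := by
      intro h
      rw [hveq, h, Matrix.mulVec_zero] at hv; exact hv rfl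
    have hgkv : (g : Matrix (Fin 4) (Fin 4) ℂ) *ᵥ ((k : Matrix (Fin 4) (Fin 4) ℂ) *ᵥ v) ≠ 0 := by
      rw [← hveq]; exact hv
    refine ⟨(k : Matrix (Fin 4) (Fin 4) ℂ) *ᵥ v, hgkv, hkv, ?_, ?_, ?_⟩
    · have h := h1.1 v; rw [Matrix.mulVecLin_apply] at h; rw [h]; exact hv0
    · have h := h1.2 v hv0; rw [Matrix.mulVecLin_apply] at h; rw [h]; exact hQ
    · exact mk_congr _ _ _ _ hveq
  · rintro ⟨v, hv, hvne, hv0, hQ, rfl⟩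
    have hveq : ((g * k : GL (Fin 4) ℂ) : Matrix (Fin 4) (Fin 4) ℂ) *ᵥ
        (((k⁻¹ : GL (Fin 4) ℂ) : Matrix (Fin 4) (Fin 4) ℂ) *ᵥ v)
        = (g : Matrix (Fin 4) (Fin 4) ℂ) *ᵥ v := by
      rw [Matrix.mulVec_mulVec, ← Units.val_mul, mul_inv_cancel_right]
    have hkv : ((k⁻¹ : GL (Fin 4) ℂ) : Matrix (Fin 4) (Fin 4) ℂ) *ᵥ v ≠ 0 := by
      intro h
      rw [h, Matrix.mulVec_zero] at hveq
      exact hv hveq.symm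
    have hgkv : ((g * k : GL (Fin 4) ℂ) : Matrix (Fin 4) (Fin 4) ℂ) *ᵥ
        (((k⁻¹ : GL (Fin 4) ℂ) : Matrix (Fin 4) (Fin 4) ℂ) *ᵥ v) ≠ 0 := by
      rw [hveq]; exact hv
    refine ⟨((k⁻¹ : GL (Fin 4) ℂ) : Matrix (Fin 4) (Fin 4) ℂ) *ᵥ v, hgkv, hkv, ?_, ?_, ?_⟩
    · have h := h2.1 v; rw [Matrix.mulVecLin_apply] at h; rw [h]; exact hv0
    · have h := h2.2 v hv0; rw [Matrix.mulVecLin_apply] at h; rw [h]; exact hQ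
    · exact mk_congr _ _ _ _ hveq.symm

end

open ConicAux in
/-- any two pairs (nondegenerate conic, disjoint line) in `P³(ℂ)` are
projectively equivalent: some `h ∈ GL₄(ℂ)` maps `X₁` onto `X₂` (the image of `X₁ = conic g₁`
under the projective transformation induced by `h` is `conic (h * g₁)`) and `L₁` onto `L₂`. -/
theorem conic_line_pairs_projectively_equivalent
    (g₁ g₂ : GL (Fin 4) ℂ) (L₁ L₂ : Submodule ℂ (Fin 4 → ℂ))
    (hL₁ : Module.finrank ℂ L₁ = 2) (hL₂ : Module.finrank ℂ L₂ = 2)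
    (hd₁ : ∀ v ∈ L₁, ∀ hv : v ≠ 0, Projectivization.mk ℂ v hv ∉ conic g₁)
    (hd₂ : ∀ v ∈ L₂, ∀ hv : v ≠ 0, Projectivization.mk ℂ v hv ∉ conic g₂) :
    ∃ h : GL (Fin 4) ℂ,
      conic (h * g₁) = conic g₂ ∧
      Submodule.map (Matrix.mulVecLin (h : Matrix (Fin 4) (Fin 4) ℂ)) L₁ = L₂ := by
  obtain ⟨u₁, w₁, hu₁, hw₁, hB₁, hM₁⟩ := extract g₁ L₁ hL₁ hd₁
  obtain ⟨u₂, w₂, hu₂, hw₂, hB₂, hM₂⟩ := extract g₂ L₂ hL₂ hd₂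
  obtain ⟨φ₁, ψ₁, hpf₁, hfp₁, hd0₁, hd1₁, hg₁'⟩ := ConicAux.exists_good u₁ w₁ hu₁ hw₁ hB₁
  obtain ⟨φ₂, ψ₂, hpf₂, hfp₂, hd0₂, hd1₂, hg₂'⟩ := ConicAux.exists_good u₂ w₂ hu₂ hw₂ hB₂
  have hmv : ∀ f : E →ₗ[ℂ] E, Matrix.mulVecLin (LinearMap.toMatrix' f) = f := by
    intro f
    apply LinearMap.ext
    intro v
    rw [Matrix.mulVecLin_apply, ← Matrix.toLin'_apply, Matrix.toLin'_toMatrix']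
  let K₁ : GL (Fin 4) ℂ := ⟨LinearMap.toMatrix' φ₁, LinearMap.toMatrix' ψ₁,
    by rw [← LinearMap.toMatrix'_comp, hfp₁, LinearMap.toMatrix'_id],
    by rw [← LinearMap.toMatrix'_comp, hpf₁, LinearMap.toMatrix'_id]⟩
  let K₂ : GL (Fin 4) ℂ := ⟨LinearMap.toMatrix' φ₂, LinearMap.toMatrix' ψ₂,
    by rw [← LinearMap.toMatrix'_comp, hfp₂, LinearMap.toMatrix'_id],
    by rw [← LinearMap.toMatrix'_comp, hpf₂, LinearMap.toMatrix'_id]⟩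
  have hgψ₁ : good ψ₁ := good_of_inv hg₁' hfp₁
  have hgψ₂ : good ψ₂ := good_of_inv hg₂' hfp₂
  refine ⟨g₂ * K₂ * K₁⁻¹ * g₁⁻¹, ?_, ?_⟩
  · have heq : g₂ * K₂ * K₁⁻¹ * g₁⁻¹ * g₁ = g₂ * (K₂ * K₁⁻¹) := by group
    rw [heq]
    apply conic_stab
    · have hcoe : ((K₂ * K₁⁻¹ : GL (Fin 4) ℂ) : Matrix (Fin 4) (Fin 4) ℂ)
          = LinearMap.toMatrix' φ₂ * LinearMap.toMatrix' ψ₁ := rfl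
      rw [hcoe, Matrix.mulVecLin_mul, hmv, hmv]
      exact good_comp hg₂' hgψ₁
    · have hcoe : (((K₂ * K₁⁻¹)⁻¹ : GL (Fin 4) ℂ) : Matrix (Fin 4) (Fin 4) ℂ)
          = LinearMap.toMatrix' φ₁ * LinearMap.toMatrix' ψ₂ := rfl
      rw [hcoe, Matrix.mulVecLin_mul, hmv, hmv]
      exact good_comp hg₁' hgψ₂
  · have step : ∀ (A B : Matrix (Fin 4) (Fin 4) ℂ) (p : Submodule ℂ (Fin 4 → ℂ)),
        Submodule.map (Matrix.mulVecLin (A * B)) p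
          = Submodule.map (Matrix.mulVecLin A) (Submodule.map (Matrix.mulVecLin B) p) := by
      intro A B p
      rw [Matrix.mulVecLin_mul, Submodule.map_comp]
    have hcoe : ((g₂ * K₂ * K₁⁻¹ * g₁⁻¹ : GL (Fin 4) ℂ) : Matrix (Fin 4) (Fin 4) ℂ)
        = ((g₂ : Matrix (Fin 4) (Fin 4) ℂ) * (K₂ : Matrix (Fin 4) (Fin 4) ℂ)
            * ((K₁⁻¹ : GL (Fin 4) ℂ) : Matrix (Fin 4) (Fin 4) ℂ))
          * ((g₁⁻¹ : GL (Fin 4) ℂ) : Matrix (Fin 4) (Fin 4) ℂ) := rfl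
    rw [hcoe, step, step, step, hM₁]
    have hs₁ : Submodule.map
        (Matrix.mulVecLin ((K₁⁻¹ : GL (Fin 4) ℂ) : Matrix (Fin 4) (Fin 4) ℂ))
        (Submodule.span ℂ {u₁, w₁}) = Submodule.span ℂ {ConicAux.d0, ConicAux.d1} := by
      have hcoe₁ : ((K₁⁻¹ : GL (Fin 4) ℂ) : Matrix (Fin 4) (Fin 4) ℂ)
          = LinearMap.toMatrix' ψ₁ := rfl
      rw [hcoe₁, hmv]
      have hsp : Submodule.span ℂ ({u₁, w₁} : Set E)
          = Submodule.map φ₁ (Submodule.span ℂ {ConicAux.d0, ConicAux.d1}) := by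
        rw [Submodule.map_span, Set.image_pair, hd0₁, hd1₁]
      rw [hsp, ← Submodule.map_comp, hpf₁, Submodule.map_id]
    rw [hs₁]
    have hs₂ : Submodule.map (Matrix.mulVecLin (K₂ : Matrix (Fin 4) (Fin 4) ℂ))
        (Submodule.span ℂ {ConicAux.d0, ConicAux.d1}) = Submodule.span ℂ {u₂, w₂} := by
      have hcoe₂ : (K₂ : Matrix (Fin 4) (Fin 4) ℂ) = LinearMap.toMatrix' φ₂ := rfl
      rw [hcoe₂, hmv, Submodule.map_span, Set.image_pair, hd0₂, hd1₂]
    rw [hs₂, ← hM₂, ← step, ← Units.val_mul, mul_inv_cancel]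
    have : ((1 : GL (Fin 4) ℂ) : Matrix (Fin 4) (Fin 4) ℂ) = 1 := rfl
    rw [this, Matrix.mulVecLin_one, Submodule.map_id]
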